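/- Let ℓ be a loss bounded in [0, B], and suppose a metric learning algorithm is (K, ε(·))-robust: Z is partitioned into K disjoint sets C₁,…,C_K such that for every training pair (z₁,z₂) from sample T and every z, z' ∈ Z with z₁, z ∈ C_i and z₂, z' ∈ C_j, |ℓ(A_T, z₁, z₂) - ℓ(A_T, z, z')| ≤ ε(T). Given the combinatorial estimate ∑_{i=1}^K | |N_i|/n - μ(C_i) | ≤ λ, where N_i is the set of training points falling in C_i and μ(C_i) the probability of C_i, the deviation between true and empirical pair-based risks satisfies |R(A_T) - R_T(A_T)| ≤ ε(T) + 2Bλ. -/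

import Mathlib

open MeasureTheory Finset Classical

open scoped Classical

/-- Deterministic part of the robustness generalization bound for metric learning:
if the algorithm is `(K, ε)`-robust with respect to a partition `C₁,…,C_K` of `Z`,
the loss is bounded in `[0,B]`, and the empirical cell frequencies deviate from the
cell probabilities by at most `λ` in total, then the gap between the true pair-based
risk and the empirical pair-based risk is at most `ε + 2Bλ`. -/
theorem robust_metric_learning_generalization (Z : Type*) [MeasurableSpace Z]
    (P : Measure Z) [IsProbabilityMeasure P]
    (K n : ℕ) (hn : 0 < n) (C : Fin K → Set Z)
    (hmeas : ∀ i, MeasurableSet (C i))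
    (hdisj : ∀ i j, i ≠ j → Disjoint (C i) (C j))
    (hcover : (⋃ i, C i) = Set.univ)
    (T : Fin n → Z) (ℓ : Z → Z → ℝ)
    (hℓmeas : Measurable fun q : Z × Z => ℓ q.1 q.2)
    (B : ℝ) (hℓ0 : ∀ z z', 0 ≤ ℓ z z') (hℓB : ∀ z z', ℓ z z' ≤ B)
    (ε lam : ℝ)
    (hrobust : ∀ (a b : Fin n) (z z' : Z) (i j : Fin K),
      T a ∈ C i → z ∈ C i → T b ∈ C j → z' ∈ C j →
      |ℓ (T a) (T b) - ℓ z z'| ≤ ε)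
    (hconc : ∑ i : Fin K,
        |((Finset.univ.filter fun a : Fin n => T a ∈ C i).card : ℝ) / n -
          (P (C i)).toReal| ≤ lam) :
    |(∫ z, ∫ z', ℓ z z' ∂P ∂P) -
        (1 / (n : ℝ) ^ 2) * ∑ a : Fin n, ∑ b : Fin n, ℓ (T a) (T b)| ≤
      ε + 2 * B * lam := by
  classical
  have hn' : (0:ℝ) < n := by exact_mod_cast hn
  set z0 : Z := T ⟨0, hn⟩ with hz0
  have hB0 : 0 ≤ B := le_trans (hℓ0 z0 z0) (hℓB z0 z0)
  -- the cell index of a point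
  have hidx : ∀ a : Fin n, ∃ i, T a ∈ C i := fun a => by
    have : T a ∈ ⋃ i, C i := by rw [hcover]; trivial
    exact Set.mem_iUnion.mp this
  let idx : Fin n → Fin K := fun a => (hidx a).choose
  have hidx_mem : ∀ a, T a ∈ C (idx a) := fun a => (hidx a).choose_spec
  have hidx_eq : ∀ a i, T a ∈ C i → idx a = i := by
    intro a i h
    by_contra hne
    exact Set.disjoint_left.mp (hdisj _ _ hne) (hidx_mem a) h
  have hε0 : 0 ≤ ε := by
    have h := hrobust ⟨0, hn⟩ ⟨0, hn⟩ z0 z0 (idx ⟨0, hn⟩) (idx ⟨0, hn⟩)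
      (hidx_mem _) (hidx_mem _) (hidx_mem _) (hidx_mem _)
    simpa [hz0] using h
  set μc : Fin K → ℝ := fun i => (P (C i)).toReal with hμc
  set N : Fin K → Finset (Fin n) := fun i => Finset.univ.filter fun a => T a ∈ C i with hNdef
  set p : Fin K → ℝ := fun i => ((N i).card : ℝ) / n with hpdef
  set L : Fin K → Fin K → ℝ :=
    fun i j => ∫ q in C i ×ˢ C j, ℓ q.1 q.2 ∂(P.prod P) with hLdef
  set S : Fin K → Fin K → ℝ :=
    fun i j => ∑ a ∈ N i, ∑ b ∈ N j, ℓ (T a) (T b) with hSdef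
  have hmemN : ∀ (i) (a : Fin n), a ∈ N i ↔ T a ∈ C i := by
    intro i a; simp [hNdef]
  have hNfilter : ∀ i, N i = Finset.univ.filter fun a => idx a = i := by
    intro i; ext a
    simp only [hNdef, mem_filter, mem_univ, true_and]
    exact ⟨hidx_eq a i, fun h => h ▸ hidx_mem a⟩
  have hp0 : ∀ i, 0 ≤ p i := fun i => by positivity
  have hμ0 : ∀ i, 0 ≤ μc i := fun i => ENNReal.toReal_nonneg
  -- integrability
  have hInt : Integrable (fun q : Z × Z => ℓ q.1 q.2) (P.prod P) := by
    refine (integrable_const B).mono' hℓmeas.aestronglyMeasurable (ae_of_all _ fun q => ?_)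
    rw [Real.norm_eq_abs, abs_of_nonneg (hℓ0 _ _)]
    exact hℓB _ _
  -- partition of the product space
  have hDmeas : ∀ ij : Fin K × Fin K, MeasurableSet (C ij.1 ×ˢ C ij.2) :=
    fun ij => (hmeas _).prod (hmeas _)
  have hDdisj : Pairwise (Function.onFun Disjoint fun ij : Fin K × Fin K => C ij.1 ×ˢ C ij.2) := by
    intro ij kl hne
    rw [Function.onFun, Set.disjoint_left]
    rintro ⟨x, y⟩ ⟨hx, hy⟩ ⟨hx', hy'⟩
    rcases eq_or_ne ij.1 kl.1 with h1 | h1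
    · rcases eq_or_ne ij.2 kl.2 with h2 | h2
      · exact hne (Prod.ext h1 h2)
      · exact Set.disjoint_left.mp (hdisj _ _ h2) hy hy'
    · exact Set.disjoint_left.mp (hdisj _ _ h1) hx hx'
  have hDcover : (⋃ ij : Fin K × Fin K, C ij.1 ×ˢ C ij.2) = Set.univ := by
    ext ⟨x, y⟩
    simp only [Set.mem_iUnion, Set.mem_univ, iff_true, Set.mem_prod]
    have hx : x ∈ ⋃ i, C i := by rw [hcover]; trivial
    have hy : y ∈ ⋃ i, C i := by rw [hcover]; trivial
    obtain ⟨i, hi⟩ := Set.mem_iUnion.mp hx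
    obtain ⟨j, hj⟩ := Set.mem_iUnion.mp hy
    exact ⟨(i, j), hi, hj⟩
  -- step A : the true risk decomposes over cells
  have hstepA : (∫ z, ∫ z', ℓ z z' ∂P ∂P) = ∑ i, ∑ j, L i j := by
    have h1 : (∫ z, ∫ z', ℓ z z' ∂P ∂P) = ∫ q, ℓ q.1 q.2 ∂(P.prod P) :=
      (integral_prod _ hInt).symm
    have h2 : ∫ q, ℓ q.1 q.2 ∂(P.prod P) =
        ∫ q in ⋃ ij : Fin K × Fin K, C ij.1 ×ˢ C ij.2, ℓ q.1 q.2 ∂(P.prod P) := by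
      rw [hDcover, Measure.restrict_univ]
    have h3 := integral_iUnion hDmeas hDdisj (hInt.integrableOn (s := ⋃ ij : Fin K × Fin K, C ij.1 ×ˢ C ij.2))
    rw [h1, h2, h3, tsum_fintype, Fintype.sum_prod_type]
  -- step B : the empirical sum decomposes over cells
  have hfib : ∀ (f : Fin n → ℝ), ∑ i, ∑ a ∈ N i, f a = ∑ a, f a := by
    intro f
    calc ∑ i, ∑ a ∈ N i, f a
        = ∑ i, ∑ a ∈ Finset.univ.filter fun a => idx a = i, f a := by
          refine Finset.sum_congr rfl fun i _ => ?_; rw [hNfilter]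
      _ = ∑ a, f a := Finset.sum_fiberwise _ idx f
  have hstepB : ∑ a : Fin n, ∑ b : Fin n, ℓ (T a) (T b) = ∑ i, ∑ j, S i j := by
    simp only [hSdef]
    calc ∑ a : Fin n, ∑ b : Fin n, ℓ (T a) (T b)
        = ∑ i, ∑ a ∈ N i, ∑ b : Fin n, ℓ (T a) (T b) :=
          (hfib (fun a => ∑ b, ℓ (T a) (T b))).symm
      _ = ∑ i, ∑ a ∈ N i, ∑ j, ∑ b ∈ N j, ℓ (T a) (T b) :=
          Finset.sum_congr rfl fun i _ => Finset.sum_congr rfl fun a _ =>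
            (hfib (fun b => ℓ (T a) (T b))).symm
      _ = ∑ i, ∑ j, ∑ a ∈ N i, ∑ b ∈ N j, ℓ (T a) (T b) :=
          Finset.sum_congr rfl fun i _ => Finset.sum_comm
  -- sums of p and μ are 1
  have hpsum : ∑ i, p i = 1 := by
    simp only [hpdef]
    rw [← Finset.sum_div]
    have : ∑ i, ((N i).card : ℝ) = n := by
      have h := hfib (fun _ => (1:ℝ))
      simpa [Finset.card_univ] using h
    rw [this]; field_simp
  have hμsum : ∑ i, μc i = 1 := by
    have h1 : ∑' i, P (C i) = 1 := by
      rw [← measure_iUnion (fun i j hij => hdisj i j hij) hmeas, hcover]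
      exact measure_univ
    rw [tsum_fintype] at h1
    have h2 : (∑ i, P (C i)).toReal = (1 : ENNReal).toReal := by rw [h1]
    rw [ENNReal.toReal_sum (fun i _ => measure_ne_top P _)] at h2
    simpa [hμc] using h2
  have hdsum : ∑ i, |μc i - p i| ≤ lam := by
    refine le_trans (le_of_eq ?_) hconc
    refine Finset.sum_congr rfl fun i _ => ?_
    rw [abs_sub_comm]
  -- product measure of a cell
  have hμμ : ∀ i j, ((P.prod P) (C i ×ˢ C j)).toReal = μc i * μc j := by
    intro i j
    rw [Measure.prod_prod, ENNReal.toReal_mul]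
  -- key per-cell estimate
  have key : ∀ i j, |L i j - (1 / (n:ℝ)^2) * S i j| ≤
      B * |μc i * μc j - p i * p j| + ε * (p i * p j) := by
    intro i j
    have hms : MeasurableSet (C i ×ˢ C j) := (hmeas i).prod (hmeas j)
    have hL0 : 0 ≤ L i j := setIntegral_nonneg hms (fun q _ => hℓ0 _ _)
    have hLB : L i j ≤ B * (μc i * μc j) := by
      calc L i j ≤ ∫ _ in C i ×ˢ C j, B ∂(P.prod P) :=
            setIntegral_mono_on hInt.integrableOn
              (integrable_const B).integrableOn hms (fun q _ => hℓB _ _)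
        _ = B * (μc i * μc j) := by
            rw [setIntegral_const, measureReal_def, hμμ, smul_eq_mul, mul_comm]
    have hppS : (1 / (n:ℝ)^2) * S i j ≤ B * (p i * p j) := by
      have h1 : S i j ≤ ((N i).card : ℝ) * ((N j).card : ℝ) * B := by
        calc S i j ≤ ∑ _a ∈ N i, ∑ _b ∈ N j, B :=
              Finset.sum_le_sum fun a _ => Finset.sum_le_sum fun b _ => hℓB _ _
          _ = ((N i).card : ℝ) * ((N j).card : ℝ) * B := by
              simp only [Finset.sum_const, nsmul_eq_mul]
              ring
      have h2 : (1 / (n:ℝ)^2) * S i j ≤ (1 / (n:ℝ)^2) * (((N i).card : ℝ) * ((N j).card : ℝ) * B) := by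
        apply mul_le_mul_of_nonneg_left h1; positivity
      refine h2.trans (le_of_eq ?_)
      simp only [hpdef]
      field_simp
    have hS0 : 0 ≤ S i j :=
      Finset.sum_nonneg fun a _ => Finset.sum_nonneg fun b _ => hℓ0 _ _
    -- pointwise integral bounds from robustness
    have hLbounds : ∀ a ∈ N i, ∀ b ∈ N j,
        (ℓ (T a) (T b) - ε) * (μc i * μc j) ≤ L i j ∧
        L i j ≤ (ℓ (T a) (T b) + ε) * (μc i * μc j) := by
      intro a ha b hb
      have haC : T a ∈ C i := (hmemN i a).mp ha
      have hbC : T b ∈ C j := (hmemN j b).mp hb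
      constructor
      · calc (ℓ (T a) (T b) - ε) * (μc i * μc j)
            = ∫ _ in C i ×ˢ C j, (ℓ (T a) (T b) - ε) ∂(P.prod P) := by
              rw [setIntegral_const, measureReal_def, hμμ, smul_eq_mul, mul_comm]
          _ ≤ L i j := by
              refine setIntegral_mono_on (integrable_const _).integrableOn
                hInt.integrableOn hms (fun q hq => ?_)
              have h := hrobust a b q.1 q.2 i j haC hq.1 hbC hq.2
              have h12 := abs_le.mp h
              show ℓ (T a) (T b) - ε ≤ ℓ q.1 q.2
              linarith [h12.1, h12.2]
      · calc L i j
            ≤ ∫ _ in C i ×ˢ C j, (ℓ (T a) (T b) + ε) ∂(P.prod P) := by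
              refine setIntegral_mono_on hInt.integrableOn
                (integrable_const _).integrableOn hms (fun q hq => ?_)
              have h := hrobust a b q.1 q.2 i j haC hq.1 hbC hq.2
              have h12 := abs_le.mp h
              show ℓ q.1 q.2 ≤ ℓ (T a) (T b) + ε
              linarith [h12.1, h12.2]
          _ = (ℓ (T a) (T b) + ε) * (μc i * μc j) := by
              rw [setIntegral_const, measureReal_def, hμμ, smul_eq_mul, mul_comm]
    have hpij : p i * p j = ((N i).card : ℝ) * ((N j).card : ℝ) / (n:ℝ)^2 := by
      simp only [hpdef, div_mul_div_comm, pow_two]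
    rcases eq_or_lt_of_le (mul_nonneg (hp0 i) (hp0 j)) with hpp0 | hpp0
    · -- no sample pairs in the cell : S = 0
      have hpempty : ∀ k : Fin K, p k = 0 → N k = ∅ := by
        intro k hk
        simp only [hpdef] at hk
        rcases div_eq_zero_iff.mp hk with h | h
        · exact Finset.card_eq_zero.mp (by exact_mod_cast h)
        · exact absurd h (ne_of_gt hn')
      have hS0' : S i j = 0 := by
        rcases mul_eq_zero.mp hpp0.symm with h | h
        · simp [hSdef, hpempty i h]
        · simp [hSdef, hpempty j h]
      rw [hS0', ← hpp0]
      have : |L i j - 1 / (n:ℝ)^2 * 0| = L i j := by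
        rw [mul_zero, sub_zero, abs_of_nonneg hL0]
      rw [this, mul_zero, add_zero, sub_zero, abs_of_nonneg (mul_nonneg (hμ0 i) (hμ0 j))]
      exact hLB
    · -- the cell contains sample points
      rcases eq_or_lt_of_le (mul_nonneg (hμ0 i) (hμ0 j)) with hμμ0 | hμμ0
      · -- measure-zero cell : L = 0
        have hL0' : L i j = 0 := by
          have hzero : (P.prod P) (C i ×ˢ C j) = 0 := by
            have h1 : ((P.prod P) (C i ×ˢ C j)).toReal = 0 := by rw [hμμ]; exact hμμ0.symm
            have h2 : (P.prod P) (C i ×ˢ C j) ≠ ⊤ := by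
              rw [Measure.prod_prod]
              exact ENNReal.mul_ne_top (measure_ne_top _ _) (measure_ne_top _ _)
            exact (ENNReal.toReal_eq_zero_iff _).mp h1 |>.resolve_right h2
          simp only [hLdef]
          rw [Measure.restrict_eq_zero.mpr hzero, integral_zero_measure]
        have habs1 : |μc i * μc j - p i * p j| = p i * p j := by
          rw [← hμμ0, zero_sub, abs_neg, abs_of_nonneg (mul_nonneg (hp0 i) (hp0 j))]
        have hx0 : (0:ℝ) ≤ 1 / (n:ℝ)^2 * S i j :=
          mul_nonneg (by positivity) hS0
        rw [hL0', zero_sub, abs_neg, abs_of_nonneg hx0, habs1]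
        have hεpp : 0 ≤ ε * (p i * p j) := mul_nonneg hε0 (mul_nonneg (hp0 i) (hp0 j))
        linarith [hppS]
      · -- main case : both positive
        set c : ℝ := L i j / (μc i * μc j) with hc
        have hc0 : 0 ≤ c := div_nonneg hL0 (le_of_lt hμμ0)
        have hcB : c ≤ B := by
          rw [hc, div_le_iff₀ hμμ0]; exact hLB
        have hLc : L i j = c * (μc i * μc j) := by
          rw [hc, div_mul_cancel₀ _ (ne_of_gt hμμ0)]
        have hcnear : ∀ a ∈ N i, ∀ b ∈ N j, |ℓ (T a) (T b) - c| ≤ ε := by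
          intro a ha b hb
          obtain ⟨h1, h2⟩ := hLbounds a ha b hb
          rw [hLc] at h1 h2
          rw [abs_le]
          constructor
          · nlinarith
          · nlinarith
        have hSc : |c * (p i * p j) - (1 / (n:ℝ)^2) * S i j| ≤ ε * (p i * p j) := by
          have hrw : c * (p i * p j) - (1 / (n:ℝ)^2) * S i j =
              (1 / (n:ℝ)^2) * ∑ a ∈ N i, ∑ b ∈ N j, (c - ℓ (T a) (T b)) := by
            rw [hpij]
            simp only [hSdef, Finset.sum_sub_distrib, Finset.sum_const, nsmul_eq_mul]
            field_simp
          rw [hrw, abs_mul, abs_of_nonneg (by positivity : (0:ℝ) ≤ 1 / (n:ℝ)^2)]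
          have habs : |∑ a ∈ N i, ∑ b ∈ N j, (c - ℓ (T a) (T b))| ≤
              ((N i).card : ℝ) * ((N j).card : ℝ) * ε := by
            calc |∑ a ∈ N i, ∑ b ∈ N j, (c - ℓ (T a) (T b))|
                ≤ ∑ a ∈ N i, |∑ b ∈ N j, (c - ℓ (T a) (T b))| := Finset.abs_sum_le_sum_abs _ _
              _ ≤ ∑ a ∈ N i, ∑ b ∈ N j, |c - ℓ (T a) (T b)| :=
                  Finset.sum_le_sum fun a _ => Finset.abs_sum_le_sum_abs _ _
              _ ≤ ∑ _a ∈ N i, ∑ _b ∈ N j, ε := by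
                  refine Finset.sum_le_sum fun a ha => Finset.sum_le_sum fun b hb => ?_
                  rw [abs_sub_comm]
                  exact hcnear a ha b hb
              _ = ((N i).card : ℝ) * ((N j).card : ℝ) * ε := by
                  simp only [Finset.sum_const, nsmul_eq_mul]
                  ring
          calc (1 / (n:ℝ)^2) * |∑ a ∈ N i, ∑ b ∈ N j, (c - ℓ (T a) (T b))|
              ≤ (1 / (n:ℝ)^2) * (((N i).card : ℝ) * ((N j).card : ℝ) * ε) := by
                apply mul_le_mul_of_nonneg_left habs; positivity
            _ = ε * (p i * p j) := by rw [hpij]; ring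
        calc |L i j - (1 / (n:ℝ)^2) * S i j|
            ≤ |L i j - c * (p i * p j)| + |c * (p i * p j) - (1 / (n:ℝ)^2) * S i j| :=
              abs_sub_le _ _ _
          _ ≤ B * |μc i * μc j - p i * p j| + ε * (p i * p j) := by
              refine add_le_add ?_ hSc
              rw [hLc, ← mul_sub, abs_mul, abs_of_nonneg hc0]
              exact mul_le_mul_of_nonneg_right hcB (abs_nonneg _)
  -- combine everything
  have hmain : |(∫ z, ∫ z', ℓ z z' ∂P ∂P) -
      (1 / (n : ℝ) ^ 2) * ∑ a : Fin n, ∑ b : Fin n, ℓ (T a) (T b)| ≤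
      ∑ i, ∑ j, (B * |μc i * μc j - p i * p j| + ε * (p i * p j)) := by
    rw [hstepA, hstepB]
    have hrw : (∑ i, ∑ j, L i j) - (1 / (n:ℝ)^2) * ∑ i, ∑ j, S i j =
        ∑ i, ∑ j, (L i j - (1 / (n:ℝ)^2) * S i j) := by
      rw [Finset.mul_sum, ← Finset.sum_sub_distrib]
      refine Finset.sum_congr rfl fun i _ => ?_
      rw [Finset.mul_sum, ← Finset.sum_sub_distrib]
    rw [hrw]
    calc |∑ i, ∑ j, (L i j - (1 / (n:ℝ)^2) * S i j)|
        ≤ ∑ i, |∑ j, (L i j - (1 / (n:ℝ)^2) * S i j)| := Finset.abs_sum_le_sum_abs _ _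
      _ ≤ ∑ i, ∑ j, |L i j - (1 / (n:ℝ)^2) * S i j| :=
          Finset.sum_le_sum fun i _ => Finset.abs_sum_le_sum_abs _ _
      _ ≤ ∑ i, ∑ j, (B * |μc i * μc j - p i * p j| + ε * (p i * p j)) :=
          Finset.sum_le_sum fun i _ => Finset.sum_le_sum fun j _ => key i j
  refine hmain.trans ?_
  have hsplit : ∑ i, ∑ j, (B * |μc i * μc j - p i * p j| + ε * (p i * p j)) =
      B * (∑ i, ∑ j, |μc i * μc j - p i * p j|) + ε * (∑ i, ∑ j, p i * p j) := by
    simp only [Finset.sum_add_distrib, Finset.mul_sum]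
  rw [hsplit]
  have hpp1 : ∑ i, ∑ j, p i * p j = 1 := by
    have : ∑ i, ∑ j, p i * p j = (∑ i, p i) * (∑ j, p j) := by
      rw [Finset.sum_mul]
      refine Finset.sum_congr rfl fun i _ => ?_
      rw [Finset.mul_sum]
    rw [this, hpsum, one_mul]
  have hdiff : ∑ i, ∑ j, |μc i * μc j - p i * p j| ≤ 2 * lam := by
    have hub : ∀ i j, |μc i * μc j - p i * p j| ≤ μc i * |μc j - p j| + p j * |μc i - p i| := by
      intro i j
      have : μc i * μc j - p i * p j = μc i * (μc j - p j) + p j * (μc i - p i) := by ring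
      rw [this]
      calc |μc i * (μc j - p j) + p j * (μc i - p i)|
          ≤ |μc i * (μc j - p j)| + |p j * (μc i - p i)| := abs_add_le _ _
        _ = μc i * |μc j - p j| + p j * |μc i - p i| := by
            rw [abs_mul, abs_mul, abs_of_nonneg (hμ0 i), abs_of_nonneg (hp0 j)]
    calc ∑ i, ∑ j, |μc i * μc j - p i * p j|
        ≤ ∑ i, ∑ j, (μc i * |μc j - p j| + p j * |μc i - p i|) :=
          Finset.sum_le_sum fun i _ => Finset.sum_le_sum fun j _ => hub i j
      _ = (∑ i, μc i) * (∑ j, |μc j - p j|) + (∑ j, p j) * (∑ i, |μc i - p i|) := by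
          have e1 : ∑ i, ∑ j, (μc i * |μc j - p j| + p j * |μc i - p i|)
              = (∑ i, ∑ j, μc i * |μc j - p j|) + ∑ i, ∑ j, p j * |μc i - p i| := by
            rw [← Finset.sum_add_distrib]
            exact Finset.sum_congr rfl fun i _ => Finset.sum_add_distrib
          have e2 : (∑ i, ∑ j, μc i * |μc j - p j|)
              = (∑ i, μc i) * (∑ j, |μc j - p j|) :=
            (Finset.sum_mul_sum _ _ _ _).symm
          have e3 : (∑ i : Fin K, ∑ j : Fin K, p j * |μc i - p i|)
              = (∑ j, p j) * (∑ i, |μc i - p i|) := by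
            rw [Finset.sum_comm]
            exact (Finset.sum_mul_sum _ _ _ _).symm
          rw [e1, e2, e3]
      _ ≤ 2 * lam := by
          rw [hμsum, hpsum]
          linarith [hdsum]
  calc B * (∑ i, ∑ j, |μc i * μc j - p i * p j|) + ε * (∑ i, ∑ j, p i * p j)
      ≤ B * (2 * lam) + ε * 1 := by
        rw [hpp1]
        exact add_le_add (mul_le_mul_of_nonneg_left hdiff hB0) (le_refl _)
    _ = ε + 2 * B * lam := by ring
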